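/- For d \ge 1 and n \ge d+1, the maximum weight of a permutation of length n with d descents is d(n-d-1); in particular, for any permutation \sigma \in S_n with des(\sigma) = d, w(\sigma) \le d(n-d-1). -/

import Mathlib

/-- A rooted tree with natural-number labels. -/
inductive RTree : Type
  | node : ℕ → List RTree → RTree
deriving Repr

namespace RTree

/-- Number of leaves of a rooted tree (a node with no children is a leaf). -/
def leafCount : RTree → ℕ
  | .node _ cs =>
    if cs.isEmpty then 1 else (cs.attach.map fun c => leafCount c.1).sum
decreasing_by
  have := List.sizeOf_lt_of_mem c.2
  simp only [RTree.node.sizeOf_spec]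
  omega

/-- The list of labels of the leaves of a rooted tree. -/
def leafVals : RTree → List ℕ
  | .node v cs =>
    if cs.isEmpty then [v] else (cs.attach.map fun c => leafVals c.1).flatten
decreasing_by
  have := List.sizeOf_lt_of_mem c.2
  simp only [RTree.node.sizeOf_spec]
  omega

/-- The sum, over all internal (non-leaf) nodes `v`, of the number of leaves in the
subtree of `v`. -/
def incidenceSum : RTree → ℕ
  | .node v cs =>
    if cs.isEmpty then 0
    else leafCount (.node v cs) + (cs.attach.map fun c => incidenceSum c.1).sum
decreasing_by
  have := List.sizeOf_lt_of_mem c.2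
  simp only [RTree.node.sizeOf_spec]
  omega

end RTree

/-- Split a word into blocks by repeatedly cutting just after the (first occurrence of
the) global maximum of the remaining word, as in the maximum-weight tree construction. -/
def maxSplit : ℕ → List ℕ → List (List ℕ)
  | 0, _ => []
  | _, [] => []
  | fuel + 1, l =>
    let i := l.idxOf (l.foldr max 0)
    l.take (i + 1) :: maxSplit fuel (l.drop (i + 1))

/-- Build the minimum decomposition tree of a word: the root is the minimum `m`; the
word splits as `π₁ ⋯ π_L · m · π_R`, where the `πᵢ` are the blocks of the left part
cut at successive global maxima; the children of `m` are the trees of the `πᵢ` and of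
`π_R`. -/
def minDecomp : ℕ → List ℕ → RTree
  | 0, _ => .node 0 []
  | fuel + 1, l =>
    let m := l.foldr min (l.headD 0)
    let i := l.idxOf m
    let left := l.take i
    let right := l.drop (i + 1)
    .node m
      (((maxSplit left.length left).map (minDecomp fuel))
        ++ (if right.isEmpty then [] else [minDecomp fuel right]))

/-- The word of a permutation `σ ∈ Sₙ` (values in `{1,…,n}`) with `n+1` appended. -/
def permWord {n : ℕ} (σ : Equiv.Perm (Fin n)) : List ℕ :=
  (List.ofFn fun i => (σ i : ℕ) + 1) ++ [n + 1]

/-- The minimum decomposition tree of a permutation. -/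
def permTree {n : ℕ} (σ : Equiv.Perm (Fin n)) : RTree :=
  minDecomp (permWord σ).length (permWord σ)

/-- The weight of a permutation `σ ∈ Sₙ` (Corollary 3.3): the sum over the non-descent
nodes of the number of descents (leaves) in their subtree of its maximum-weight maxmin
tree, minus `n`. -/
def permWeight {n : ℕ} (σ : Equiv.Perm (Fin n)) : ℕ :=
  RTree.incidenceSum (permTree σ) - n

/-- The number of descents of a permutation. -/
def numDescents {n : ℕ} (σ : Equiv.Perm (Fin n)) : ℕ :=
  (Finset.univ.filter fun i : Fin n =>
    ∃ h : (i : ℕ) + 1 < n, σ ⟨(i : ℕ) + 1, h⟩ < σ i).card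

/-!
The minimum decomposition tree of the word `σ(1) ⋯ σ(n) (n+1)` has `n + 1` nodes and
`des σ + 1` leaves: a new leaf starts exactly after each descent. Each of its `n - des σ`
internal nodes has at most all `des σ + 1` leaves below it, so
`w(σ) ≤ (n - d)(d + 1) - n = d(n - d - 1)`. The bound is attained by
`1 2 ⋯ (n-d-1) n (n-1) ⋯ (n-d)`, whose tree is a path through `1, …, n-d` whose last node
carries all `d + 1` leaves.
-/

namespace RTree

def nodeCount : RTree → ℕ
  | .node _ cs => 1 + (cs.attach.map fun c => nodeCount c.1).sum
decreasing_by
  have := List.sizeOf_lt_of_mem c.2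
  simp only [RTree.node.sizeOf_spec]
  omega

@[induction_eliminator]
theorem induction {motive : RTree → Prop}
    (node : ∀ v cs, (∀ c ∈ cs, motive c) → motive (.node v cs)) : ∀ T, motive T
  | .node v cs => node v cs fun c _ => induction node c
decreasing_by
  have := List.sizeOf_lt_of_mem ‹c ∈ cs›
  simp only [RTree.node.sizeOf_spec]
  omega

@[simp]
theorem leafCount_node (v : ℕ) (cs : List RTree) :
    leafCount (.node v cs) = if cs = [] then 1 else (cs.map leafCount).sum := by
  rw [leafCount]; simp

@[simp]
theorem incidenceSum_node (v : ℕ) (cs : List RTree) :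
    incidenceSum (.node v cs) =
      if cs = [] then 0 else (cs.map leafCount).sum + (cs.map incidenceSum).sum := by
  rw [incidenceSum, leafCount]; split_ifs <;> simp_all

@[simp]
theorem nodeCount_node (v : ℕ) (cs : List RTree) :
    nodeCount (.node v cs) = 1 + (cs.map nodeCount).sum := by
  rw [nodeCount]; simp

theorem leafCount_le_nodeCount (T : RTree) : leafCount T ≤ nodeCount T := by
  induction T with
  | node v cs ih =>
    have : (cs.map leafCount).sum ≤ (cs.map nodeCount).sum := List.sum_le_sum ih
    simp only [leafCount_node, nodeCount_node]
    split_ifs <;> omega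

/-- Each of the `nodeCount T - leafCount T` internal nodes sees at most `leafCount T` leaves. -/
theorem incidenceSum_add_mul_le (T : RTree) :
    incidenceSum T + leafCount T * leafCount T ≤ nodeCount T * leafCount T := by
  induction T with
  | node v cs ih =>
    rcases eq_or_ne cs [] with rfl | hcs
    · simp
    simp only [leafCount_node, incidenceSum_node, nodeCount_node, hcs, if_false]
    generalize hL : (cs.map leafCount).sum = L
    have hchild : ∀ c ∈ cs, incidenceSum c + leafCount c * L ≤ nodeCount c * L := by
      intro c hc
      have hcL : leafCount c ≤ L := hL ▸ List.le_sum_of_mem (List.mem_map_of_mem hc)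
      have := ih c hc
      have := leafCount_le_nodeCount c
      nlinarith
    have := List.sum_le_sum hchild
    rw [List.sum_map_add, List.sum_map_mul_right, List.sum_map_mul_right, hL] at this
    linarith

@[simp]
theorem leafCount_foldr_chain (p : List ℕ) (T : RTree) :
    (p.foldr (fun a T => .node a [T]) T).leafCount = T.leafCount := by
  induction p with
  | nil => rfl
  | cons a p ih => simp [ih]

@[simp]
theorem incidenceSum_foldr_chain (p : List ℕ) (T : RTree) :
    (p.foldr (fun a T => .node a [T]) T).incidenceSum =
      p.length * T.leafCount + T.incidenceSum := by
  induction p with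
  | nil => simp
  | cons a p ih => simp [ih]; ring


@[simp]
theorem leafCount_node_map_leaf (v : ℕ) {ls : List ℕ} (h : ls ≠ []) :
    (node v (ls.map (node · []))).leafCount = ls.length := by
  simp [h, Function.comp_def]

@[simp]
theorem incidenceSum_node_map_leaf (v : ℕ) {ls : List ℕ} (h : ls ≠ []) :
    (node v (ls.map (node · []))).incidenceSum = ls.length := by
  simp [h, Function.comp_def]

end RTree

def descentCount : List ℕ → ℕ
  | a :: b :: t => (if b < a then 1 else 0) + descentCount (b :: t)
  | _ => 0

@[simp] theorem descentCount_nil : descentCount [] = 0 := rfl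

@[simp] theorem descentCount_singleton (a : ℕ) : descentCount [a] = 0 := rfl

@[simp] theorem descentCount_cons_cons (a b : ℕ) (t : List ℕ) :
    descentCount (a :: b :: t) = (if b < a then 1 else 0) + descentCount (b :: t) := rfl

theorem descentCount_append_cons (a : List ℕ) (x : ℕ) (b : List ℕ) :
    descentCount (a ++ x :: b) = descentCount (a ++ [x]) + descentCount (x :: b) := by
  induction a with
  | nil => simp
  | cons y t ih =>
    rcases t with _ | ⟨z, s⟩
    · simp
    · simp only [List.cons_append, descentCount_cons_cons] at ih ⊢
      omega

theorem descentCount_append_singleton_of_le {l : List ℕ} {y : ℕ} (h : ∀ x ∈ l, x ≤ y) :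
    descentCount (l ++ [y]) = descentCount l := by
  rcases l.eq_nil_or_concat with rfl | ⟨l', x, rfl⟩
  · simp
  · rw [List.concat_eq_append] at h ⊢
    have : ¬ y < x := not_lt.2 (h x (by simp))
    rw [List.append_assoc, List.singleton_append, descentCount_append_cons]
    simp [this]

theorem descentCount_ofFn {k : ℕ} (g : Fin k → ℕ) :
    descentCount (List.ofFn g) =
      (Finset.univ.filter fun i : Fin k =>
        ∃ h : (i : ℕ) + 1 < k, g ⟨(i : ℕ) + 1, h⟩ < g i).card := by
  induction k with
  | zero => simp
  | succ k ih =>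
    rcases k with _ | k
    · refine (Finset.card_eq_zero.2 (Finset.filter_eq_empty_iff.2 ?_)).symm
      rintro i - ⟨h, -⟩
      omega
    · rw [List.ofFn_succ, List.ofFn_succ, descentCount_cons_cons,
        ← List.ofFn_succ (f := fun i => g i.succ), ih]
      conv_rhs => rw [Fin.card_filter_univ_succ']
      congr 1
      · simp [Fin.succ]
      · congr 1; ext i; simp [Fin.succ]

theorem List.foldr_max_bot_eq {α : Type*} [LinearOrder α] [OrderBot α] {l : List α} {M : α}
    (hM : M ∈ l) (h : ∀ x ∈ l, x ≤ M) : l.foldr max ⊥ = M :=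
  le_antisymm (List.max_le_of_forall_le l M h) (List.le_max_of_le hM le_rfl)

theorem List.foldr_min_eq {α : Type*} [LinearOrder α] {l : List α} {a m : α} (hm : m ∈ l)
    (h : ∀ x ∈ l, m ≤ x) (ha : m ≤ a) : l.foldr min a = m := by
  refine le_antisymm (List.min_le_of_le' a hm le_rfl) ?_
  clear hm
  induction l with
  | nil => exact ha
  | cons y t ih => simp_all

theorem List.Nodup.exists_eq_append_cons {α : Type*} {l : List α} {a : α} (hl : l.Nodup)
    (ha : a ∈ l) : ∃ s t, l = s ++ a :: t ∧ a ∉ s ∧ a ∉ t := by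
  obtain ⟨s, t, rfl⟩ := List.append_of_mem ha
  have := List.nodup_middle.1 hl
  simp only [List.nodup_cons, List.mem_append, not_or] at this
  exact ⟨s, t, rfl, this.1⟩

theorem List.Nodup.exists_split_at_max {α : Type*} [LinearOrder α] {l : List α} (hl : l.Nodup)
    (hne : l ≠ []) :
    ∃ s M t, l = s ++ M :: t ∧ (∀ x ∈ s, x < M) ∧ ∀ x ∈ t, x < M := by
  obtain ⟨M, hM, hmax⟩ := l.toFinset.exists_max_image id (by simpa using hne)
  simp only [List.mem_toFinset, id] at hM hmax
  obtain ⟨s, t, rfl, hs, ht⟩ := hl.exists_eq_append_cons hM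
  exact ⟨s, M, t, rfl, fun x hx => (hmax x (by simp [hx])).lt_of_ne (ne_of_mem_of_not_mem hx hs),
    fun x hx => (hmax x (by simp [hx])).lt_of_ne (ne_of_mem_of_not_mem hx ht)⟩

theorem List.Nodup.exists_split_at_min {α : Type*} [LinearOrder α] {l : List α} (hl : l.Nodup)
    (hne : l ≠ []) : ∃ s m t, l = s ++ m :: t ∧ (∀ x ∈ s, m < x) ∧ ∀ x ∈ t, m < x :=
  hl.exists_split_at_max (α := αᵒᵈ) hne

def EndsWithMax (l : List ℕ) : Prop := ∃ w M, l = w ++ [M] ∧ ∀ x ∈ w, x < M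

theorem EndsWithMax.ne_nil {l : List ℕ} (h : EndsWithMax l) : l ≠ [] := by
  obtain ⟨w, M, rfl, -⟩ := h
  simp

theorem endsWithMax_append_singleton_iff {l : List ℕ} {M : ℕ} :
    EndsWithMax (l ++ [M]) ↔ ∀ x ∈ l, x < M := by
  refine ⟨fun ⟨w, M', h, hw⟩ => ?_, fun h => ⟨l, M, rfl, h⟩⟩
  obtain ⟨rfl, h'⟩ := List.append_inj' h rfl
  cases h'
  exact hw

theorem EndsWithMax.of_append_right {a b : List ℕ} (h : EndsWithMax (a ++ b)) (hb : b ≠ []) :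
    EndsWithMax b := by
  obtain ⟨b', y, rfl⟩ := (List.eq_nil_or_concat b).resolve_left hb
  rw [List.concat_eq_append, ← List.append_assoc, endsWithMax_append_singleton_iff] at h
  rw [List.concat_eq_append, endsWithMax_append_singleton_iff]
  exact fun x hx => h x (List.mem_append_right a hx)

theorem maxSplit_nil (f : ℕ) : maxSplit f [] = [] := by cases f <;> rfl

theorem maxSplit_succ_append_cons (f : ℕ) {b rest : List ℕ} {M : ℕ} (hb : ∀ x ∈ b, x < M)
    (hrest : ∀ x ∈ rest, x < M) :
    maxSplit (f + 1) (b ++ M :: rest) = (b ++ [M]) :: maxSplit f rest := by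
  have hmax : (b ++ M :: rest).foldr max 0 = M := by
    refine List.foldr_max_bot_eq (by simp) fun x hx => ?_
    simp only [List.mem_append, List.mem_cons] at hx
    rcases hx with hx | rfl | hx
    exacts [(hb x hx).le, le_rfl, (hrest x hx).le]
  have hidx : (b ++ M :: rest).idxOf M = b.length := by
    rw [List.idxOf_append_of_notMem fun h => (hb M h).false, List.idxOf_cons_self, add_zero]
  obtain ⟨y, t, hyt⟩ := List.exists_cons_of_ne_nil (by simp : b ++ M :: rest ≠ [])
  have hsplit : b ++ M :: rest = (b ++ [M]) ++ rest := by simp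
  rw [hyt, maxSplit, ← hyt, hmax, hidx, hsplit, List.take_left' (by simp),
    List.drop_left' (by simp)]
  simp

theorem flatten_maxSplit {f : ℕ} {l : List ℕ} (hl : l.Nodup) (hf : l.length ≤ f) :
    (maxSplit f l).flatten = l := by
  induction f generalizing l with
  | zero => rw [List.length_eq_zero_iff.1 (Nat.le_zero.1 hf), maxSplit_nil, List.flatten_nil]
  | succ f ih =>
    rcases eq_or_ne l [] with rfl | hne
    · simp [maxSplit_nil]
    obtain ⟨b, M, rest, rfl, hb, hrest⟩ := hl.exists_split_at_max hne
    rw [maxSplit_succ_append_cons f hb hrest, List.flatten_cons,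
      ih hl.of_append_right.of_cons (by simp at hf; omega)]
    simp

theorem endsWithMax_of_mem_maxSplit {f : ℕ} {l c : List ℕ} (hl : l.Nodup)
    (hc : c ∈ maxSplit f l) : EndsWithMax c := by
  induction f generalizing l with
  | zero => simp [maxSplit] at hc
  | succ f ih =>
    rcases eq_or_ne l [] with rfl | hne
    · simp [maxSplit_nil] at hc
    obtain ⟨b, M, rest, rfl, hb, hrest⟩ := hl.exists_split_at_max hne
    rw [maxSplit_succ_append_cons f hb hrest, List.mem_cons] at hc
    rcases hc with rfl | hc
    exacts [⟨b, M, rfl, hb⟩, ih hl.of_append_right.of_cons hc]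

/-- Each cut after a block maximum is a descent, and so is the step from the last block down
to `m`. -/
theorem sum_map_descentCount_maxSplit {f : ℕ} {l : List ℕ} {m : ℕ} (hl : l.Nodup)
    (hf : l.length ≤ f) (hm : ∀ x ∈ l, m < x) :
    ((maxSplit f l).map (descentCount · + 1)).sum = descentCount (l ++ [m]) := by
  induction f generalizing l with
  | zero => simp [List.length_eq_zero_iff.1 (Nat.le_zero.1 hf), maxSplit_nil]
  | succ f ih =>
    rcases eq_or_ne l [] with rfl | hne
    · simp [maxSplit_nil]
    obtain ⟨b, M, rest, rfl, hb, hrest⟩ := hl.exists_split_at_max hne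
    have hstep : descentCount (M :: (rest ++ [m])) = 1 + descentCount (rest ++ [m]) := by
      rcases rest with _ | ⟨y, rest⟩
      · simp [hm M (by simp)]
      · simp [hrest y (by simp)]
    rw [maxSplit_succ_append_cons f hb hrest, List.map_cons, List.sum_cons,
      ih hl.of_append_right.of_cons (by simp at hf; omega) (fun x hx => hm x (by simp [hx])),
      List.append_assoc, List.cons_append, descentCount_append_cons b M (rest ++ [m]), hstep]
    omega

theorem maxSplit_of_pairwise_gt {xs : List ℕ} (h : xs.Pairwise (· > ·)) :
    maxSplit xs.length xs = xs.map ([·]) := by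
  induction xs with
  | nil => rfl
  | cons x t ih =>
    rw [List.pairwise_cons] at h
    rw [List.length_cons, ← List.nil_append (x :: t),
      maxSplit_succ_append_cons _ (by simp) h.1, ih h.2]
    rfl

theorem minDecomp_succ_append_cons (f : ℕ) {left right : List ℕ} {m : ℕ}
    (hleft : ∀ x ∈ left, m < x) (hright : ∀ x ∈ right, m < x) :
    minDecomp (f + 1) (left ++ m :: right) =
      .node m ((maxSplit left.length left).map (minDecomp f) ++
        if right = [] then [] else [minDecomp f right]) := by
  have hle : ∀ x ∈ left ++ m :: right, m ≤ x := by
    intro x hx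
    simp only [List.mem_append, List.mem_cons] at hx
    rcases hx with hx | rfl | hx
    exacts [(hleft x hx).le, le_rfl, (hright x hx).le]
  have hmin : (left ++ m :: right).foldr min ((left ++ m :: right).headD 0) = m :=
    List.foldr_min_eq (by simp) hle (hle _ (by cases left <;> simp))
  have hidx : (left ++ m :: right).idxOf m = left.length := by
    rw [List.idxOf_append_of_notMem fun h => (hleft m h).false, List.idxOf_cons_self, add_zero]
  have hsplit : left ++ m :: right = (left ++ [m]) ++ right := by simp
  rw [minDecomp, hmin, hidx, List.take_left' rfl, hsplit, List.drop_left' (by simp)]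
  simp [List.isEmpty_iff]

theorem minDecomp_succ_singleton (f x : ℕ) : minDecomp (f + 1) [x] = .node x [] := by
  simpa [maxSplit_nil] using minDecomp_succ_append_cons f (left := []) (right := []) (m := x)
    (by simp) (by simp)

theorem minDecomp_succ_cons_of_lt (f : ℕ) {m : ℕ} {rest : List ℕ} (hne : rest ≠ [])
    (h : ∀ x ∈ rest, m < x) : minDecomp (f + 1) (m :: rest) = .node m [minDecomp f rest] := by
  simpa [maxSplit_nil, hne] using minDecomp_succ_append_cons f (left := []) (by simp) h

theorem sublist_of_mem_maxSplit {l c : List ℕ} (hl : l.Nodup) (hc : c ∈ maxSplit l.length l) :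
    c.Sublist l :=
  flatten_maxSplit hl le_rfl ▸ List.sublist_flatten_of_mem hc

theorem nodeCount_minDecomp {f : ℕ} {l : List ℕ} (hne : l ≠ []) (hl : l.Nodup)
    (hf : l.length ≤ f) : (minDecomp f l).nodeCount = l.length := by
  induction f generalizing l with
  | zero => exact absurd (List.length_eq_zero_iff.1 (Nat.le_zero.1 hf)) hne
  | succ f ih =>
    obtain ⟨left, m, right, rfl, hleft, hright⟩ := hl.exists_split_at_min hne
    have hleft_nd : left.Nodup := hl.of_append_left
    have hlen : left.length + right.length + 1 ≤ f + 1 := by simpa [← add_assoc] using hf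
    have hblocks :
        (((maxSplit left.length left).map (minDecomp f)).map RTree.nodeCount).sum =
          left.length := by
      conv_rhs => rw [← flatten_maxSplit hleft_nd le_rfl, List.length_flatten]
      rw [List.map_map]
      refine congrArg List.sum (List.map_congr_left fun c hc => ?_)
      have hsub := sublist_of_mem_maxSplit hleft_nd hc
      exact ih (endsWithMax_of_mem_maxSplit hleft_nd hc).ne_nil (hleft_nd.sublist hsub)
        (by have := hsub.length_le; omega)
    rw [minDecomp_succ_append_cons f hleft hright, RTree.nodeCount_node, List.map_append,
      List.sum_append, hblocks]
    split_ifs with hr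
    · simp [hr]; omega
    · simp [ih hr hl.of_append_right.of_cons (by omega)]
      omega

theorem leafCount_minDecomp {f : ℕ} {l : List ℕ} (hmax : EndsWithMax l) (hl : l.Nodup)
    (hf : l.length ≤ f) : (minDecomp f l).leafCount = descentCount l + 1 := by
  induction f generalizing l with
  | zero => exact absurd (List.length_eq_zero_iff.1 (Nat.le_zero.1 hf)) hmax.ne_nil
  | succ f ih =>
    obtain ⟨left, m, right, rfl, hleft, hright⟩ := hl.exists_split_at_min hmax.ne_nil
    rcases eq_or_ne right [] with rfl | hr
    · have hleft_nil : left = [] := List.eq_nil_iff_forall_not_mem.2 fun x hx =>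
        (hleft x hx).not_gt (endsWithMax_append_singleton_iff.1 hmax x hx)
      subst hleft_nil
      simp [minDecomp_succ_singleton]
    have hleft_nd : left.Nodup := hl.of_append_left
    have hlen : left.length + right.length + 1 ≤ f + 1 := by simpa [← add_assoc] using hf
    have hblocks :
        (((maxSplit left.length left).map (minDecomp f)).map RTree.leafCount).sum =
          descentCount (left ++ [m]) := by
      rw [← sum_map_descentCount_maxSplit hleft_nd le_rfl hleft, List.map_map]
      refine congrArg List.sum (List.map_congr_left fun c hc => ?_)
      have hsub := sublist_of_mem_maxSplit hleft_nd hc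
      exact ih (endsWithMax_of_mem_maxSplit hleft_nd hc) (hleft_nd.sublist hsub)
        (by have := hsub.length_le; omega)
    have hright_max : EndsWithMax right := by
      rw [List.append_cons] at hmax
      exact hmax.of_append_right hr
    have hright_leaf := ih hright_max hl.of_append_right.of_cons (by omega)
    obtain ⟨y, r, rfl⟩ := List.exists_cons_of_ne_nil hr
    rw [minDecomp_succ_append_cons f hleft hright, if_neg hr, RTree.leafCount_node,
      if_neg (by simp),
      List.map_append, List.sum_append, hblocks, descentCount_append_cons left m (y :: r)]
    simp only [List.map_cons, List.map_nil, List.sum_cons, List.sum_nil, hright_leaf,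
      descentCount_cons_cons, (hright y (by simp)).not_gt, if_false]
    omega

section permWord

variable {n : ℕ} (σ : Equiv.Perm (Fin n))

theorem permWord_length : (permWord σ).length = n + 1 := by
  simp [permWord]

theorem le_of_mem_ofFn_perm (x : ℕ) (hx : x ∈ List.ofFn fun i => (σ i : ℕ) + 1) :
    x ≤ n := by
  obtain ⟨i, rfl⟩ := List.mem_ofFn.1 hx
  exact (σ i).isLt

theorem permWord_nodup : (permWord σ).Nodup := by
  refine List.Nodup.append ?_ (List.nodup_singleton _) ?_
  · exact List.nodup_ofFn.2 fun i j h => σ.injective (Fin.ext (by simpa using h))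
  · intro x hx hx'
    have := le_of_mem_ofFn_perm σ x hx
    simp only [List.mem_singleton] at hx'
    omega

theorem endsWithMax_permWord : EndsWithMax (permWord σ) :=
  endsWithMax_append_singleton_iff.2 fun x hx => Nat.lt_succ_of_le (le_of_mem_ofFn_perm σ x hx)

theorem descentCount_permWord : descentCount (permWord σ) = numDescents σ := by
  rw [permWord, descentCount_append_singleton_of_le fun x hx =>
    (le_of_mem_ofFn_perm σ x hx).trans (Nat.le_succ n), descentCount_ofFn, numDescents]
  simp

theorem nodeCount_permTree : (permTree σ).nodeCount = n + 1 := by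
  rw [permTree, nodeCount_minDecomp (endsWithMax_permWord σ).ne_nil (permWord_nodup σ) le_rfl,
    permWord_length]

theorem leafCount_permTree : (permTree σ).leafCount = numDescents σ + 1 := by
  rw [permTree, leafCount_minDecomp (endsWithMax_permWord σ) (permWord_nodup σ) le_rfl,
    descentCount_permWord]

theorem permWeight_le : permWeight σ ≤ numDescents σ * (n - numDescents σ - 1) := by
  have hbound := (permTree σ).incidenceSum_add_mul_le
  have hle := (permTree σ).leafCount_le_nodeCount
  rw [nodeCount_permTree, leafCount_permTree] at hbound hle
  rw [permWeight]
  generalize (permTree σ).incidenceSum = I at *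
  generalize numDescents σ = d at *
  obtain ⟨k, rfl⟩ : ∃ k, n = d + k := ⟨n - d, by omega⟩
  have hI : I ≤ (d + 1) * k := by nlinarith
  rcases k with _ | k
  · simp_all
  · rw [show d + (k + 1) - d - 1 = k by omega, Nat.sub_le_iff_le_add]
    linarith

end permWord


theorem minDecomp_append_of_pairwise_lt (f : ℕ) {p B : List ℕ} (hp : p.Pairwise (· < ·))
    (hpB : ∀ x ∈ p, ∀ y ∈ B, x < y) (hB : B ≠ []) :
    minDecomp (p.length + f) (p ++ B) = p.foldr (fun a T => .node a [T]) (minDecomp f B) := by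
  induction p with
  | nil => simp
  | cons a p ih =>
    rw [List.pairwise_cons] at hp
    have hrest : ∀ x ∈ p ++ B, a < x := by
      intro x hx
      rcases List.mem_append.1 hx with hx | hx
      exacts [hp.1 x hx, hpB a (by simp) x hx]
    rw [List.length_cons, add_right_comm, List.cons_append,
      minDecomp_succ_cons_of_lt _ (by simp [hB]) hrest,
      ih hp.2 fun x hx => hpB x (by simp [hx]), List.foldr_cons]

theorem minDecomp_pairwise_gt_append {xs : List ℕ} {m M : ℕ} (hxs : xs.Pairwise (· > ·))
    (hm : ∀ x ∈ xs, m < x) (hM : m < M) :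
    minDecomp (xs.length + 2) (xs ++ [m, M]) = .node m ((xs ++ [M]).map (.node · [])) := by
  rw [minDecomp_succ_append_cons (xs.length + 1) hm (by simpa using hM),
    maxSplit_of_pairwise_gt hxs, if_neg (by simp), minDecomp_succ_singleton, List.map_map]
  simp [Function.comp_def, minDecomp_succ_singleton]

section reverseSuffix

variable {n k : ℕ}

def reverseSuffixFun (n k : ℕ) (i : Fin n) : Fin n :=
  if h : (i : ℕ) < k then i else ⟨k + n - 1 - i, by have := i.isLt; omega⟩

theorem reverseSuffixFun_val (i : Fin n) :
    (reverseSuffixFun n k i : ℕ) = if (i : ℕ) < k then (i : ℕ) else k + n - 1 - i := by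
  unfold reverseSuffixFun
  split_ifs <;> rfl

theorem reverseSuffixFun_involutive (n k : ℕ) : Function.Involutive (reverseSuffixFun n k) := by
  intro i
  have := i.isLt
  ext
  by_cases h : (i : ℕ) < k
  · simp [reverseSuffixFun_val, h]
  · have h' : ¬ k + n - 1 - (i : ℕ) < k := by omega
    simp only [reverseSuffixFun_val, h, h', if_false]
    omega

def reverseSuffix (n k : ℕ) : Equiv.Perm (Fin n) :=
  (reverseSuffixFun_involutive n k).toPerm

theorem permWord_reverseSuffix (hk : k ≤ n) :
    permWord (reverseSuffix n k) =
      (List.range k).map (· + 1) ++ ((List.range (n - k)).map (n - ·) ++ [n + 1]) := by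
  have hofn : (List.ofFn fun i => (reverseSuffix n k i : ℕ) + 1) =
      (List.range n).map fun i => if i < k then i + 1 else k + n - i := by
    rw [List.ofFn_eq_map, ← List.map_coe_finRange_eq_range, List.map_map]
    refine List.map_congr_left fun i _ => ?_
    simp only [reverseSuffix, Function.Involutive.coe_toPerm, Function.comp_apply,
      reverseSuffixFun_val]
    split_ifs <;> omega
  rw [permWord, hofn, ← List.append_assoc]
  congr 1
  obtain ⟨j, rfl⟩ : ∃ j, n = k + j := ⟨n - k, by omega⟩
  rw [List.range_add, List.map_append, List.map_map, Nat.add_sub_cancel_left]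
  congr 1
  · exact List.map_congr_left fun i hi => by simp [List.mem_range.1 hi]
  · refine List.map_congr_left fun i hi => ?_
    simp only [List.mem_range] at hi
    simp only [Function.comp_apply, add_lt_iff_neg_left, not_lt_zero, if_false]
    omega

theorem permTree_reverseSuffix (hk : k < n) :
    permTree (reverseSuffix n k) = ((List.range k).map (· + 1)).foldr (fun a T => .node a [T])
      (.node (k + 1) (((List.range (n - k - 1)).map (n - ·) ++ [n + 1]).map (.node · []))) := by
  set p := (List.range k).map (· + 1)
  set xs := (List.range (n - k - 1)).map (n - ·)
  have hword : permWord (reverseSuffix n k) = p ++ (xs ++ [k + 1, n + 1]) := by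
    rw [permWord_reverseSuffix hk.le, show n - k = (n - k - 1) + 1 by omega, List.range_succ,
      List.map_append]
    simp only [List.map_cons, List.map_nil, List.append_assoc, List.cons_append, List.nil_append,
      show n - (n - k - 1) = k + 1 by omega, xs]
    rfl
  have hp : p.Pairwise (· < ·) :=
    List.pairwise_map.2 (List.pairwise_lt_range.imp fun h => Nat.add_lt_add_right h 1)
  have hxs : xs.Pairwise (· > ·) := List.pairwise_map.2 <|
    List.pairwise_lt_range.imp_of_mem fun _ hb hab => by simp only [List.mem_range] at hb; omega
  have hpB : ∀ x ∈ p, ∀ y ∈ xs ++ [k + 1, n + 1], x < y := by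
    intro x hx y hy
    simp only [p, xs, List.mem_map, List.mem_range, List.mem_append, List.mem_cons,
      List.not_mem_nil, or_false] at hx hy
    omega
  have hm : ∀ x ∈ xs, k + 1 < x := by
    intro x hx
    simp only [xs, List.mem_map, List.mem_range] at hx
    omega
  rw [permTree, hword, show (p ++ (xs ++ [k + 1, n + 1])).length = p.length + (xs.length + 2) by
      simp, minDecomp_append_of_pairwise_lt _ hp hpB (by simp),
    minDecomp_pairwise_gt_append hxs hm (by omega)]

theorem numDescents_reverseSuffix (hk : k < n) : numDescents (reverseSuffix n k) = n - k - 1 := by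
  have h := leafCount_permTree (reverseSuffix n k)
  rw [permTree_reverseSuffix hk, RTree.leafCount_foldr_chain,
    RTree.leafCount_node_map_leaf _ (by simp)] at h
  simp only [List.length_append, List.length_map, List.length_range, List.length_singleton] at h
  omega

theorem permWeight_reverseSuffix (hk : k < n) :
    permWeight (reverseSuffix n k) = (n - k - 1) * k := by
  rw [permWeight, permTree_reverseSuffix hk, RTree.incidenceSum_foldr_chain,
    RTree.leafCount_node_map_leaf _ (by simp), RTree.incidenceSum_node_map_leaf _ (by simp)]
  simp only [List.length_append, List.length_map, List.length_range, List.length_singleton]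
  obtain ⟨j, rfl⟩ : ∃ j, n = k + j + 1 := ⟨n - k - 1, by omega⟩
  rw [show k + j + 1 - k - 1 = j by omega, Nat.sub_eq_iff_eq_add (by nlinarith)]
  ring

end reverseSuffix

theorem max_weight_permutation_general (n d : ℕ) (hn : d + 1 ≤ n) :
    (∀ σ : Equiv.Perm (Fin n), numDescents σ = d → permWeight σ ≤ d * (n - d - 1)) ∧
    (∃ σ : Equiv.Perm (Fin n), numDescents σ = d ∧ permWeight σ = d * (n - d - 1)) := by
  refine ⟨fun σ hσ => hσ ▸ permWeight_le σ, reverseSuffix n (n - d - 1), ?_, ?_⟩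
  · rw [numDescents_reverseSuffix (by omega)]
    omega
  · rw [permWeight_reverseSuffix (by omega), show n - (n - d - 1) - 1 = d by omega]

/-- For `d ≥ 1` and `n ≥ d + 1`, the maximum weight of a permutation of length `n` with
`d` descents is `d(n - d - 1)`: every such permutation has weight at most `d(n-d-1)`,
and this bound is attained. -/
theorem max_weight_permutation (n d : ℕ) (hd : 1 ≤ d) (hn : d + 1 ≤ n) :
    (∀ σ : Equiv.Perm (Fin n), numDescents σ = d → permWeight σ ≤ d * (n - d - 1)) ∧
    (∃ σ : Equiv.Perm (Fin n), numDescents σ = d ∧ permWeight σ = d * (n - d - 1)) :=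
  max_weight_permutation_general n d hn
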